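/- arXiv:1908.04273 — 5 statements merged into one kernel-verified Lean document; each statement's English description precedes it below -/
import Mathlib

section
/- Assume the closures of F(w) and F(w') are disjoint for all distinct words w, w' of equal length. Then there exists a continuous map φ : 𝓕 → 𝓕 on the abstract fractal 𝓕 = range π satisfying φ(π i) = π(σ i) for every i : ℕ → Fin m, where σ is the shift (σ i)(n) = i(n+1); moreover φ is topologically conjugate to σ via the homeomorphism π. -/
open Filter Set Metric Topology

/-- The length-`n` prefix word `(i 0, i 1, ..., i (n-1))` of an infinite sequence `i`. -/
def wordPrefix {m : ℕ} (i : ℕ → Fin m) (n : ℕ) : List (Fin m) :=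
  (List.range n).map i

lemma wordPrefix_length {m : ℕ} (i : ℕ → Fin m) (n : ℕ) :
    (wordPrefix i n).length = n := by simp [wordPrefix]

lemma wordPrefix_apply {m : ℕ} (i j : ℕ → Fin m) (n : ℕ)
    (h : wordPrefix i (n + 1) = wordPrefix j (n + 1)) : i n = j n := by
  have := congrArg (fun l : List (Fin m) => l.getD n (i n)) h
  simpa [wordPrefix, List.getD_eq_getElem?_getD] using this

instance wordFinite {m n : ℕ} : Finite {w : List (Fin m) // w.length = n} :=
  Finite.of_equiv (List.Vector (Fin m) n) (Equiv.refl _)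

/-- There is a continuous similarity map `φ` on `𝓕 = range π` with `φ (π i) = π (σ i)`
for the shift `σ`, and `φ` is topologically conjugate to `σ` via the homeomorphism `π`. -/
theorem abstract_fractal_similarity_map_exists
    {X : Type*} [MetricSpace X] [CompactSpace X] {m : ℕ} (hm : 2 ≤ m)
    (F : List (Fin m) → Set X)
    (hne : ∀ w : List (Fin m), (F w).Nonempty)
    (hnest : ∀ (w : List (Fin m)) (j : Fin m), F (w ++ [j]) ⊆ F w)
    (hdiam : Tendsto
      (fun n => ⨆ w : {w : List (Fin m) // w.length = n}, Metric.diam (F w.1))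
      atTop (𝓝 0))
    (π : (ℕ → Fin m) → X)
    (hπ : ∀ i : ℕ → Fin m, (⋂ n : ℕ, closure (F (wordPrefix i n))) = {π i})
    (hdisj : ∀ w w' : List (Fin m), w.length = w'.length → w ≠ w' →
      Disjoint (closure (F w)) (closure (F w'))) :
    ∃ φ : Set.range π → Set.range π, Continuous φ ∧
      (∀ i : ℕ → Fin m,
        (φ ⟨π i, Set.mem_range_self i⟩ : X) = π (fun n => i (n + 1))) ∧
      ∃ e : (ℕ → Fin m) ≃ₜ Set.range π,
        (∀ i : ℕ → Fin m, (e i : X) = π i) ∧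
        ∀ i : ℕ → Fin m, φ (e i) = e (fun n => i (n + 1)) := by
  -- π i lies in every closure (F (wordPrefix i n))
  have hmem : ∀ (i : ℕ → Fin m) (n : ℕ), π i ∈ closure (F (wordPrefix i n)) := by
    intro i n
    have : π i ∈ (⋂ n : ℕ, closure (F (wordPrefix i n))) := by
      rw [hπ i]; exact rfl
    exact Set.mem_iInter.mp this n
  -- injectivity
  have hinj : Function.Injective π := by
    intro i j hij
    by_contra hne'
    have : ∃ n, i n ≠ j n := by
      by_contra h
      push_neg at h
      exact hne' (funext h)
    obtain ⟨n, hn⟩ := this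
    have hw : wordPrefix i (n + 1) ≠ wordPrefix j (n + 1) := fun h =>
      hn (wordPrefix_apply i j n h)
    have hd := hdisj _ _ (by simp [wordPrefix_length]) hw
    exact (Set.disjoint_left.mp hd (hmem i (n + 1)))
      (hij ▸ hmem j (n + 1))
  -- distance estimate
  have hdist : ∀ (i j : ℕ → Fin m) (n : ℕ), wordPrefix i n = wordPrefix j n →
      dist (π i) (π j) ≤ Metric.diam (F (wordPrefix i n)) := by
    intro i j n h
    have h1 := hmem i n
    have h2 := hmem j n
    rw [← h] at h2; rw [← Metric.diam_closure]
    exact Metric.dist_le_diam_of_mem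
      Metric.isBounded_of_compactSpace.closure h1 h2
  -- continuity of π
  have hcont : Continuous π := by
    rw [continuous_iff_continuousAt]
    intro i
    rw [ContinuousAt, Metric.tendsto_nhds]
    intro ε hε
    obtain ⟨n, hn⟩ := (hdiam.eventually_lt_const hε).exists
    have hopen : ∀ᶠ j in 𝓝 i, wordPrefix j n = wordPrefix i n := by
      have : ∀ᶠ j in 𝓝 i, ∀ k < n, j k = i k := by
        have : ∀ k, ∀ᶠ j : ℕ → Fin m in 𝓝 i, j k = i k := by
          intro k
          have hk : IsOpen ((fun j : ℕ → Fin m => j k) ⁻¹' {i k}) :=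
            (isOpen_discrete ({i k} : Set (Fin m))).preimage
              (continuous_apply k)
          exact hk.mem_nhds rfl
        have := (Finset.range n).eventually_all.mpr (fun k _ => this k)
        filter_upwards [this] with j hj k hk
        exact hj k (Finset.mem_range.mpr hk)
      filter_upwards [this] with j hj
      apply List.ext_getElem (by simp [wordPrefix_length])
      intro k h1 h2
      simp only [wordPrefix, List.getElem_map, List.getElem_range]
      exact hj k (by simpa [wordPrefix_length] using h1)
    filter_upwards [hopen] with j hj
    calc dist (π j) (π i) ≤ Metric.diam (F (wordPrefix j n)) := hdist j i n hj
      _ ≤ ⨆ w : {w : List (Fin m) // w.length = n}, Metric.diam (F w.1) :=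
          le_ciSup (f := fun w : {w : List (Fin m) // w.length = n} =>
              Metric.diam (F w.1))
            (Set.Finite.bddAbove (Set.finite_range _))
            ⟨wordPrefix j n, wordPrefix_length j n⟩
      _ < ε := hn
  -- homeomorphism onto range
  have hcont' : Continuous (fun i => (⟨π i, Set.mem_range_self i⟩ : Set.range π)) :=
    hcont.subtype_mk _
  let e : (ℕ → Fin m) ≃ₜ Set.range π :=
    Continuous.homeoOfEquivCompactToT2 (f := Equiv.ofInjective π hinj) hcont'
  have he : ∀ i, (e i : X) = π i := fun i => rfl
  have hesymm : ∀ i : ℕ → Fin m, e.symm ⟨π i, Set.mem_range_self i⟩ = i := by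
    intro i
    have : (⟨π i, Set.mem_range_self i⟩ : Set.range π) = e i := rfl
    rw [this, Homeomorph.symm_apply_apply]
  refine ⟨fun x => e (fun n => (e.symm x) (n + 1)), ?_, ?_, e, he, ?_⟩
  · exact e.continuous.comp
      ((continuous_pi fun n => (continuous_apply (n + 1)).comp
        e.symm.continuous))
  · intro i
    show (e (fun n => (e.symm ⟨π i, Set.mem_range_self i⟩) (n + 1)) : X) =
      π fun n => i (n + 1)
    rw [hesymm i]
    exact he _
  · intro i
    have : e.symm (e i) = i := e.symm_apply_apply i
    simp only [this]
end

section
/- Assume the closures of F(w) and F(w') are disjoint for all distinct words w, w' of equal length. Then the set of periodic points of the similarity map φ (points x ∈ 𝓕 with φᵏ(x) = x for some k ≥ 1) is dense in the abstract fractal 𝓕. -/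
/-!
Given a point `π i` and `r > 0`, pick `n` with all level-`n` diameters below `r` and let `j` be
the sequence repeating the first `n` letters of `i`. Then `π i` and `π j` both lie in the closure
of `F (i|ₙ)`, so they are `r`-close, and `π j` has period `n` because `φ` acts on codings as the
shift and `j` is shift-periodic.
-/

open Filter Set Metric Topology

def periodize {α : Type*} (i : ℕ → α) (n : ℕ) : ℕ → α :=
  fun k => i (k % n)

lemma periodize_add_self {α : Type*} (i : ℕ → α) (n : ℕ) :
    (fun k => periodize i n (k + n)) = periodize i n :=
  funext fun k => by simp [periodize]

section WordPrefix

variable {m : ℕ} (i : ℕ → Fin m) (n : ℕ)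

lemma length_wordPrefix : (wordPrefix i n).length = n := by
  simp [wordPrefix]

lemma wordPrefix_periodize : wordPrefix (periodize i n) n = wordPrefix i n :=
  List.map_congr_left fun k hk => by
    rw [periodize, Nat.mod_eq_of_lt (List.mem_range.1 hk)]

end WordPrefix

lemma diam_le_iSup_diam {X ι : Type*} [PseudoMetricSpace X] [BoundedSpace X]
    (s : ι → Set X) (i : ι) : diam (s i) ≤ ⨆ j, diam (s j) :=
  le_ciSup ⟨diam (univ : Set X), forall_mem_range.2 fun _ =>
    diam_mono (subset_univ _) (Bornology.IsBounded.all _)⟩ i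

section Coding

variable {X : Type*} {m : ℕ} {F : List (Fin m) → Set X} {π : (ℕ → Fin m) → X}

lemma coding_mem_closure [TopologicalSpace X]
    (hπ : ∀ i, ⋂ n, closure (F (wordPrefix i n)) = {π i}) (i : ℕ → Fin m) (n : ℕ) :
    π i ∈ closure (F (wordPrefix i n)) :=
  mem_iInter.1 ((hπ i).symm ▸ mem_singleton (π i)) n

lemma dist_coding_le_diam [PseudoMetricSpace X] [BoundedSpace X]
    (hπ : ∀ i, ⋂ n, closure (F (wordPrefix i n)) = {π i}) {i j : ℕ → Fin m} {n : ℕ}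
    (hij : wordPrefix j n = wordPrefix i n) : dist (π i) (π j) ≤ diam (F (wordPrefix i n)) := by
  rw [← diam_closure]
  exact dist_le_diam_of_mem (Bornology.IsBounded.all _) (coding_mem_closure hπ i n)
    (hij ▸ coding_mem_closure hπ j n)

lemma iterate_coding_eq_coding_shift {φ : range π → range π}
    (hφ : ∀ i, (φ ⟨π i, mem_range_self i⟩ : X) = π (fun n => i (n + 1))) (k : ℕ)
    (i : ℕ → Fin m) :
    φ^[k] ⟨π i, mem_range_self i⟩ = ⟨π (fun n => i (n + k)), mem_range_self _⟩ := by
  induction k generalizing i with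
  | zero => rfl
  | succ k ih =>
    have hstep :
        φ ⟨π i, mem_range_self i⟩ = ⟨π (fun n => i (n + 1)), mem_range_self _⟩ :=
      Subtype.ext (hφ i)
    rw [Function.iterate_succ_apply, hstep, ih]
    simp only [add_assoc]

end Coding

theorem abstract_fractal_periodic_points_dense_general
    {X : Type*} [MetricSpace X] [CompactSpace X] {m : ℕ}
    (F : List (Fin m) → Set X)
    (hdiam : Tendsto
      (fun n => ⨆ w : {w : List (Fin m) // w.length = n}, Metric.diam (F w.1))
      atTop (𝓝 0))
    (π : (ℕ → Fin m) → X)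
    (hπ : ∀ i : ℕ → Fin m, (⋂ n : ℕ, closure (F (wordPrefix i n))) = {π i})
    (φ : Set.range π → Set.range π)
    (hφ : ∀ i : ℕ → Fin m,
      (φ ⟨π i, Set.mem_range_self i⟩ : X) = π (fun n => i (n + 1))) :
    Dense {x : Set.range π | ∃ k : ℕ, 1 ≤ k ∧ φ^[k] x = x} := by
  rw [Metric.dense_iff]
  rintro ⟨_, i, rfl⟩ r hr
  obtain ⟨n, hsmall, hn⟩ :=
    ((hdiam.eventually (gt_mem_nhds hr)).and (eventually_ge_atTop 1)).exists
  refine ⟨⟨π (periodize i n), mem_range_self _⟩, ?_, n, hn, ?_⟩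
  · rw [mem_ball, Subtype.dist_eq, dist_comm]
    calc dist (π i) (π (periodize i n))
        ≤ diam (F (wordPrefix i n)) := dist_coding_le_diam hπ (wordPrefix_periodize i n)
      _ ≤ ⨆ w : {w : List (Fin m) // w.length = n}, diam (F w.1) :=
          diam_le_iSup_diam (fun w : {w : List (Fin m) // w.length = n} => F w.1)
            ⟨_, length_wordPrefix i n⟩
      _ < r := hsmall
  · rw [iterate_coding_eq_coding_shift hφ, periodize_add_self]

/-- The set of periodic points of the similarity map `φ` is dense in the abstract fractal. -/
theorem abstract_fractal_periodic_points_dense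
    {X : Type*} [MetricSpace X] [CompactSpace X] {m : ℕ} (hm : 2 ≤ m)
    (F : List (Fin m) → Set X)
    (hne : ∀ w : List (Fin m), (F w).Nonempty)
    (hnest : ∀ (w : List (Fin m)) (j : Fin m), F (w ++ [j]) ⊆ F w)
    (hdiam : Tendsto
      (fun n => ⨆ w : {w : List (Fin m) // w.length = n}, Metric.diam (F w.1))
      atTop (𝓝 0))
    (π : (ℕ → Fin m) → X)
    (hπ : ∀ i : ℕ → Fin m, (⋂ n : ℕ, closure (F (wordPrefix i n))) = {π i})
    (hdisj : ∀ w w' : List (Fin m), w.length = w'.length → w ≠ w' →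
      Disjoint (closure (F w)) (closure (F w')))
    (φ : Set.range π → Set.range π)
    (hφ : ∀ i : ℕ → Fin m,
      (φ ⟨π i, Set.mem_range_self i⟩ : X) = π (fun n => i (n + 1))) :
    Dense {x : Set.range π | ∃ k : ℕ, 1 ≤ k ∧ φ^[k] x = x} :=
  abstract_fractal_periodic_points_dense_general F hdiam π hπ φ hφ
end

section
/- Assume the closures of F(w) and F(w') are disjoint for all distinct words w, w' of equal length, and assume the separation condition: there exist ε₀ > 0 and n ∈ ℕ such that for every word w of length n there is a word w' of length n with d(a, b) ≥ ε₀ for all a ∈ closure(F(w)) and b ∈ closure(F(w')). Then the similarity map φ is Li–Yorke chaotic: there exists an uncountable set S ⊆ 𝓕 such that for all distinct x, y ∈ S, liminf_{k→∞} d(φᵏ(x), φᵏ(y)) = 0 and limsup_{k→∞} d(φᵏ(x), φᵏ(y)) > 0. -/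
open Filter Set Metric Topology

def LYword {m : ℕ} (w₀ w₁ : List (Fin m)) (t : ℕ → Bool) (b : ℕ) : List (Fin m) :=
  if 2 ^ Nat.log 2 b = b ∧ t (Nat.log 2 b) = true then w₁ else w₀

def LYseq {m : ℕ} (n : ℕ) (w₀ w₁ : List (Fin m)) (d : Fin m) (t : ℕ → Bool) (p : ℕ) : Fin m :=
  (LYword w₀ w₁ t (p / n)).getD (p % n) d

def LYcode (r : ℕ → Bool) (s : ℕ) : Bool := r (Nat.unpair s).1

lemma LYword_length {m n : ℕ} {w₀ w₁ : List (Fin m)} (h₀ : w₀.length = n) (h₁ : w₁.length = n)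
    (t : ℕ → Bool) (b : ℕ) : (LYword w₀ w₁ t b).length = n := by
  unfold LYword; split <;> assumption

lemma LYword_pow {m : ℕ} (w₀ w₁ : List (Fin m)) (t : ℕ → Bool) (s : ℕ) :
    LYword w₀ w₁ t (2 ^ s) = if t s then w₁ else w₀ := by
  simp [LYword, Nat.log_pow (by norm_num : 1 < 2)]

lemma LYword_nonpow {m : ℕ} (w₀ w₁ : List (Fin m)) (t : ℕ → Bool) {b : ℕ}
    (h : 2 ^ Nat.log 2 b ≠ b) : LYword w₀ w₁ t b = w₀ :=
  if_neg fun hc => h hc.1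

lemma LYseq_apply {m n : ℕ} (hn : 0 < n) (w₀ w₁ : List (Fin m)) (d : Fin m) (t : ℕ → Bool)
    {b l : ℕ} (hl : l < n) : LYseq n w₀ w₁ d t (l + n * b) = (LYword w₀ w₁ t b).getD l d := by
  unfold LYseq
  rw [Nat.add_mul_div_left _ _ hn, Nat.div_eq_of_lt hl, Nat.zero_add,
    Nat.add_mul_mod_self_left, Nat.mod_eq_of_lt hl]

lemma wordPrefix_LYseq {m n : ℕ} (hn : 0 < n) (w₀ w₁ : List (Fin m)) (d : Fin m) (t : ℕ → Bool)
    (b : ℕ) (hw : (LYword w₀ w₁ t b).length = n) :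
    wordPrefix (fun l => LYseq n w₀ w₁ d t (l + n * b)) n = LYword w₀ w₁ t b := by
  apply List.ext_getElem
  · simp [wordPrefix, hw]
  · intro l h1 h2
    simp only [wordPrefix, List.getElem_map, List.getElem_range]
    have hl : l < n := by simpa [wordPrefix] using h1
    rw [LYseq_apply hn w₀ w₁ d t hl, List.getD_eq_getElem _ _ (by omega)]

-- agreement on non-power blocks
lemma LYseq_agree {m n : ℕ} (hn : 0 < n) (w₀ w₁ : List (Fin m)) (d : Fin m) (t t' : ℕ → Bool)
    (s : ℕ) {l : ℕ} (hl : l < (2 ^ s - 1) * n) :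
    LYseq n w₀ w₁ d t (l + n * (2 ^ s + 1)) = LYseq n w₀ w₁ d t' (l + n * (2 ^ s + 1)) := by
  have hb : ∀ q : ℕ, q < 2 ^ s - 1 → 2 ^ Nat.log 2 (q + (2 ^ s + 1)) ≠ q + (2 ^ s + 1) := by
    intro q hq
    have hs1 : 1 ≤ 2 ^ s := Nat.one_le_two_pow
    have hlog : Nat.log 2 (q + (2 ^ s + 1)) = s := by
      apply Nat.log_eq_of_pow_le_of_lt_pow
      · omega
      · have : 2 ^ (s + 1) = 2 ^ s + 2 ^ s := by ring
        omega
    rw [hlog]; omega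
  have hb' := hb (l / n) ((Nat.div_lt_iff_lt_mul hn).2 hl)
  unfold LYseq
  rw [Nat.add_mul_div_left _ _ hn, LYword_nonpow w₀ w₁ t hb', LYword_nonpow w₀ w₁ t' hb']

/-- Under the separation condition, the similarity map `φ` is Li–Yorke chaotic. -/
theorem abstract_fractal_similarity_map_liYorke
    {X : Type*} [MetricSpace X] [CompactSpace X] {m : ℕ} (hm : 2 ≤ m)
    (F : List (Fin m) → Set X)
    (hne : ∀ w : List (Fin m), (F w).Nonempty)
    (hnest : ∀ (w : List (Fin m)) (j : Fin m), F (w ++ [j]) ⊆ F w)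
    (hdiam : Tendsto
      (fun n => ⨆ w : {w : List (Fin m) // w.length = n}, Metric.diam (F w.1))
      atTop (𝓝 0))
    (π : (ℕ → Fin m) → X)
    (hπ : ∀ i : ℕ → Fin m, (⋂ n : ℕ, closure (F (wordPrefix i n))) = {π i})
    (hdisj : ∀ w w' : List (Fin m), w.length = w'.length → w ≠ w' →
      Disjoint (closure (F w)) (closure (F w')))
    (φ : Set.range π → Set.range π)
    (hφ : ∀ i : ℕ → Fin m,
      (φ ⟨π i, Set.mem_range_self i⟩ : X) = π (fun n => i (n + 1)))
    (ε₀ : ℝ) (hε₀ : 0 < ε₀) (n : ℕ)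
    (hsep : ∀ w : List (Fin m), w.length = n → ∃ w' : List (Fin m), w'.length = n ∧
      ∀ a ∈ closure (F w), ∀ b ∈ closure (F w'), ε₀ ≤ dist a b) :
    ∃ S : Set (Set.range π), ¬ S.Countable ∧
      ∀ x ∈ S, ∀ y ∈ S, x ≠ y →
        Filter.liminf (fun k : ℕ => dist (φ^[k] x : X) (φ^[k] y : X)) atTop = 0 ∧
        0 < Filter.limsup (fun k : ℕ => dist (φ^[k] x : X) (φ^[k] y : X)) atTop := by
  -- basic facts
  have hmem : ∀ (i : ℕ → Fin m) (N : ℕ), π i ∈ closure (F (wordPrefix i N)) := by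
    intro i N
    have h : π i ∈ ⋂ k : ℕ, closure (F (wordPrefix i k)) := by
      rw [hπ i]; exact Set.mem_singleton _
    exact Set.mem_iInter.1 h N
  have hiter : ∀ (k : ℕ) (i : ℕ → Fin m),
      φ^[k] ⟨π i, Set.mem_range_self i⟩ = ⟨π (fun l => i (l + k)), Set.mem_range_self _⟩ := by
    intro k
    induction k with
    | zero => intro i; rfl
    | succ k ih =>
      intro i
      rw [Function.iterate_succ_apply]
      have h1 : φ ⟨π i, Set.mem_range_self i⟩
          = ⟨π (fun l => i (l + 1)), Set.mem_range_self _⟩ := by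
        apply Subtype.ext
        simpa using hφ i
      rw [h1]
      exact ih _
  have hiterval : ∀ (k : ℕ) (x : Set.range π) (i : ℕ → Fin m), (x : X) = π i →
      ((φ^[k] x : Set.range π) : X) = π (fun l => i (l + k)) := by
    intro k x i hx
    have hx' : x = ⟨π i, Set.mem_range_self i⟩ := Subtype.ext hx
    rw [hx', hiter k i]
  have hbound : ∀ (x y : Set.range π) (k : ℕ),
      dist (φ^[k] x : X) (φ^[k] y : X) ≤ Metric.diam (Set.univ : Set X) := fun x y k =>
    Metric.dist_le_diam_of_mem Metric.isBounded_of_compactSpace trivial trivial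
  have hdistle : ∀ (i j : ℕ → Fin m) (N : ℕ), (∀ l < N, i l = j l) →
      dist (π i) (π j) ≤ ⨆ w : {w : List (Fin m) // w.length = N}, Metric.diam (F w.1) := by
    intro i j N hagree
    have hpre : wordPrefix j N = wordPrefix i N := by
      simp only [wordPrefix]
      exact List.map_congr_left fun l hl => (hagree l (List.mem_range.1 hl)).symm
    have hj : π j ∈ closure (F (wordPrefix i N)) := by
      have := hmem j N; rwa [hpre] at this
    have h1 : dist (π i) (π j) ≤ Metric.diam (closure (F (wordPrefix i N))) :=
      Metric.dist_le_diam_of_mem Metric.isBounded_of_compactSpace (hmem i N) hj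
    rw [Metric.diam_closure] at h1
    refine h1.trans ?_
    have hbdd : BddAbove (Set.range fun w : {w : List (Fin m) // w.length = N} =>
        Metric.diam (F w.1)) := by
      refine ⟨Metric.diam (Set.univ : Set X), ?_⟩
      rintro x ⟨w, rfl⟩
      exact Metric.diam_mono (Set.subset_univ _) Metric.isBounded_of_compactSpace
    exact le_ciSup hbdd ⟨wordPrefix i N, by simp [wordPrefix]⟩
  -- n is positive
  rcases Nat.eq_zero_or_pos n with hn0 | hn
  · exfalso
    obtain ⟨w', hw'len, hw'⟩ := hsep [] (by simp [hn0])
    have hw'nil : w' = [] := List.length_eq_zero_iff.1 (by omega)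
    subst hw'nil
    obtain ⟨x, hx⟩ := hne []
    have := hw' x (subset_closure hx) x (subset_closure hx)
    simp only [dist_self] at this
    linarith
  -- the two separated words
  have hd : (0 : ℕ) < m := by omega
  set d : Fin m := ⟨0, hd⟩ with hdd
  set w₀ : List (Fin m) := List.replicate n d with hw₀def
  have hw₀len : w₀.length = n := List.length_replicate (n := n) (a := d)
  obtain ⟨w₁, hw₁len, hsep01⟩ := hsep w₀ hw₀len
  have hWlen : ∀ (t : ℕ → Bool) (b : ℕ), (LYword w₀ w₁ t b).length = n :=
    fun t b => LYword_length hw₀len hw₁len t b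
  -- membership of shifted sequences in block closures
  have hmemblock : ∀ (t : ℕ → Bool) (b : ℕ),
      π (fun l => LYseq n w₀ w₁ d t (l + n * b)) ∈ closure (F (LYword w₀ w₁ t b)) := by
    intro t b
    have := hmem (fun l => LYseq n w₀ w₁ d t (l + n * b)) n
    rwa [wordPrefix_LYseq hn w₀ w₁ d t b (hWlen t b)] at this
  -- separation at power-of-two blocks
  have hsepk : ∀ (t t' : ℕ → Bool) (s : ℕ), t s ≠ t' s →
      ε₀ ≤ dist (π (fun l => LYseq n w₀ w₁ d t (l + n * 2 ^ s)))
        (π (fun l => LYseq n w₀ w₁ d t' (l + n * 2 ^ s))) := by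
    intro t t' s hs
    have h1 := hmemblock t (2 ^ s)
    have h2 := hmemblock t' (2 ^ s)
    rw [LYword_pow] at h1 h2
    cases ht : t s with
    | true =>
      have ht' : t' s = false := by
        cases ht'' : t' s
        · rfl
        · exact absurd (ht.trans ht''.symm) hs
      rw [ht] at h1; rw [ht'] at h2
      simp only [if_true, if_false, Bool.false_eq_true] at h1 h2
      rw [dist_comm]
      exact hsep01 _ h2 _ h1
    | false =>
      have ht' : t' s = true := by
        cases ht'' : t' s
        · exact absurd (ht.trans ht''.symm) hs
        · rfl
      rw [ht] at h1; rw [ht'] at h2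
      simp only [if_true, if_false, Bool.false_eq_true] at h1 h2
      exact hsep01 _ h1 _ h2
  -- the family
  set f : (ℕ → Bool) → Set.range π :=
    fun r => ⟨π (LYseq n w₀ w₁ d (LYcode r)), Set.mem_range_self _⟩ with hfdef
  -- key distance facts for distinct codes
  have hkey : ∀ (r r' : ℕ → Bool) (s : ℕ), LYcode r s ≠ LYcode r' s →
      ε₀ ≤ dist (φ^[n * 2 ^ s] (f r) : X) (φ^[n * 2 ^ s] (f r') : X) := by
    intro r r' s hs
    rw [hiterval _ (f r) _ rfl, hiterval _ (f r') _ rfl]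
    exact hsepk _ _ s hs
  have hinj : Function.Injective f := by
    intro r r' h
    by_contra hrr
    obtain ⟨a, ha⟩ := Function.ne_iff.1 hrr
    have hts : LYcode r (Nat.pair a 0) ≠ LYcode r' (Nat.pair a 0) := by
      simpa [LYcode, Nat.unpair_pair] using ha
    have := hkey r r' _ hts
    rw [h] at this
    simp only [dist_self] at this
    linarith
  refine ⟨Set.range f, ?_, ?_⟩
  · -- uncountability
    intro hc
    haveI := hc.to_subtype
    have hg : Function.Injective
        (fun r : ℕ → Bool => (⟨f r, Set.mem_range_self r⟩ : ↥(Set.range f))) :=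
      fun r r' h => hinj (congrArg Subtype.val h)
    have hcnt : Countable (ℕ → Bool) := hg.countable
    obtain ⟨g, hg2⟩ := exists_injective_nat (ℕ → Bool)
    have e : (Set ℕ) ≃ (ℕ → Bool) := Equiv.arrowCongr (Equiv.refl ℕ) Equiv.propEquivBool
    exact Function.cantor_injective (fun s => g (e s)) (hg2.comp e.injective)
  · rintro x ⟨r, rfl⟩ y ⟨r', rfl⟩ hxy
    have hrr : r ≠ r' := fun h => hxy (by rw [h])
    obtain ⟨a, ha⟩ := Function.ne_iff.1 hrr
    have hbdd1 : IsBoundedUnder (· ≤ ·) atTop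
        (fun k : ℕ => dist (φ^[k] (f r) : X) (φ^[k] (f r') : X)) :=
      isBoundedUnder_of ⟨Metric.diam (Set.univ : Set X), fun k => hbound _ _ k⟩
    have hbdd2 : IsBoundedUnder (· ≥ ·) atTop
        (fun k : ℕ => dist (φ^[k] (f r) : X) (φ^[k] (f r') : X)) :=
      isBoundedUnder_of ⟨0, fun k => dist_nonneg⟩
    constructor
    · -- liminf = 0
      apply le_antisymm
      · apply le_of_forall_pos_le_add
        intro ε hε
        have hliml : liminf (fun k : ℕ => dist (φ^[k] (f r) : X) (φ^[k] (f r') : X)) atTop ≤ ε := by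
          apply Filter.liminf_le_of_frequently_le _ hbdd2
          rw [Filter.frequently_atTop]
          intro K
          obtain ⟨N₀, hN₀⟩ := Metric.tendsto_atTop.1 hdiam ε hε
          set s := max N₀ K with hsdef
          have hslt : s < 2 ^ s := Nat.lt_two_pow_self (n := s)
          refine ⟨n * (2 ^ s + 1), ?_, ?_⟩
          · have h1 : K ≤ s := le_max_right _ _
            have h2 : 2 ^ s + 1 ≤ n * (2 ^ s + 1) := Nat.le_mul_of_pos_left _ hn
            omega
          · rw [hiterval _ (f r) _ rfl, hiterval _ (f r') _ rfl]
            refine le_trans (hdistle _ _ ((2 ^ s - 1) * n) ?_) ?_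
            · intro l hl
              exact LYseq_agree hn w₀ w₁ d (LYcode r) (LYcode r') s hl
            · have hge : N₀ ≤ (2 ^ s - 1) * n := by
                have h1 : N₀ ≤ s := le_max_left _ _
                have h2 : 2 ^ s - 1 ≤ (2 ^ s - 1) * n := Nat.le_mul_of_pos_right _ hn
                omega
              have := hN₀ _ hge
              rw [Real.dist_eq, sub_zero] at this
              exact (le_abs_self _).trans this.le
        linarith [hliml]
      · exact Filter.le_liminf_of_le hbdd1.isCoboundedUnder_ge
          (Filter.Eventually.of_forall fun k => dist_nonneg)
    · -- limsup > 0
      refine lt_of_lt_of_le hε₀ (Filter.le_limsup_of_frequently_le ?_ hbdd1)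
      rw [Filter.frequently_atTop]
      intro K
      set s := Nat.pair a K with hsdef
      have hKs : K ≤ s := Nat.right_le_pair a K
      have hslt : s < 2 ^ s := Nat.lt_two_pow_self (n := s)
      refine ⟨n * 2 ^ s, ?_, ?_⟩
      · have h2 : 2 ^ s ≤ n * 2 ^ s := Nat.le_mul_of_pos_left _ hn
        omega
      · exact hkey r r' s (by simpa [LYcode, hsdef, Nat.unpair_pair] using ha)
end

section
/- The shift map σ on the full shift space Σ = (ℕ → Fin m) possesses an unpredictable point: there exist x ∈ Σ, ε > 0, and sequences of natural numbers (tₖ) and (sₖ) with tₖ → ∞ and sₖ → ∞ such that σ^{tₖ}(x) → x as k → ∞ and dist(σ^{tₖ+sₖ}(x), σ^{sₖ}(x)) ≥ ε for all k. -/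
open Filter Set Topology

/-- The shift map `σ` on the sequence space `ℕ → Fin m`, `(σ x) n = x (n + 1)`. -/
def shiftMap {m : ℕ} : (ℕ → Fin m) → (ℕ → Fin m) := fun x n => x (n + 1)

/-- The metric on the full shift space `ℕ → Fin m`: `dist x y = (1/2) ^ n₀`, where `n₀` is the
first index at which `x` and `y` differ (and `dist x x = 0`). It induces the product topology. -/
noncomputable local instance shiftMetric (m : ℕ) : MetricSpace (ℕ → Fin m) :=
  PiNat.metricSpace

/-!
The point is the Thue–Morse sequence `x n = (number of binary ones of n) mod 2`, with the two
symbols embedded in `Fin m`. Adding `2 ^ k` to a number `a < 2 ^ k` flips `x a`, so the shift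
by `3 * 2 ^ k = 2 ^ (k + 1) + 2 ^ k` flips the first `2 ^ k` symbols twice and `σ^{3·2^k} x` agrees
with `x` on them, whence `σ^{3·2^k} x → x`. On the other hand, with `s = 2 ^ (k + 1)` the zeroth
symbols of `σ^{t+s} x` and `σ^s x` are `x (2 ^ (k + 2) + 2 ^ k) = x 0` and `x (2 ^ (k + 1)) ≠ x 0`,
so these points are at distance `1`.
-/

def thueMorse : ℕ → Bool
  | 0 => false
  | n + 1 => xor (decide ((n + 1) % 2 = 1)) (thueMorse ((n + 1) / 2))
  decreasing_by exact Nat.div_lt_self n.succ_pos one_lt_two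

@[simp]
lemma thueMorse_zero : thueMorse 0 = false := by
  rw [thueMorse]

lemma thueMorse_eq (a : ℕ) : thueMorse a = xor (decide (a % 2 = 1)) (thueMorse (a / 2)) := by
  cases a with
  | zero => simp
  | succ n => rw [thueMorse]

lemma thueMorse_two_pow_add {k a : ℕ} (ha : a < 2 ^ k) :
    thueMorse (2 ^ k + a) = !thueMorse a := by
  induction k generalizing a with
  | zero =>
    obtain rfl : a = 0 := by simpa using ha
    simp [thueMorse_eq 1]
  | succ k ih =>
    have hmod : (2 ^ (k + 1) + a) % 2 = a % 2 := by simp [pow_succ, Nat.add_mod]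
    have hdiv : (2 ^ (k + 1) + a) / 2 = 2 ^ k + a / 2 := by omega
    rw [thueMorse_eq (2 ^ (k + 1) + a), hmod, hdiv, ih (by omega), thueMorse_eq a]
    cases decide (a % 2 = 1) <;> cases thueMorse (a / 2) <;> rfl

lemma thueMorse_two_pow (k : ℕ) : thueMorse (2 ^ k) = true := by
  simpa using thueMorse_two_pow_add (a := 0) (Nat.two_pow_pos k)

lemma thueMorse_add_three_mul_two_pow {k a : ℕ} (ha : a < 2 ^ k) :
    thueMorse (a + 3 * 2 ^ k) = thueMorse a := by
  have hsplit : a + 3 * 2 ^ k = 2 ^ (k + 1) + (2 ^ k + a) := by ring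
  rw [hsplit, thueMorse_two_pow_add (by omega), thueMorse_two_pow_add ha, Bool.not_not]

lemma thueMorse_five_mul_two_pow (k : ℕ) : thueMorse (5 * 2 ^ k) = false := by
  have hsplit : 5 * 2 ^ k = 2 ^ (k + 2) + 2 ^ k := by ring
  rw [hsplit, thueMorse_two_pow_add (Nat.pow_lt_pow_right one_lt_two (by omega)),
    thueMorse_two_pow]
  rfl

lemma shiftMap_iterate_apply {m : ℕ} (x : ℕ → Fin m) (t n : ℕ) :
    shiftMap^[t] x n = x (n + t) := by
  induction t generalizing x with
  | zero => rfl
  | succ t ih => rw [Function.iterate_succ_apply, ih]; rfl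

lemma tendsto_iterate_shiftMap_of_prefix_eq {m : ℕ} {x : ℕ → Fin m} {t N : ℕ → ℕ}
    (hN : Tendsto N atTop atTop) (heq : ∀ k, ∀ i < N k, x (i + t k) = x i) :
    Tendsto (fun k => shiftMap^[t k] x) atTop (𝓝 x) := by
  have hdist : ∀ k, dist (shiftMap^[t k] x) x ≤ (1 / 2 : ℝ) ^ N k := fun k =>
    PiNat.mem_cylinder_iff_dist_le.1 <| PiNat.mem_cylinder_iff.2 fun i hi => by
      rw [shiftMap_iterate_apply, heq k i hi]
  exact tendsto_iff_dist_tendsto_zero.2 <| squeeze_zero (fun _ => dist_nonneg) hdist <|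
    (tendsto_pow_atTop_nhds_zero_of_lt_one (by norm_num) (by norm_num)).comp hN

lemma one_le_dist_of_apply_zero_ne {m : ℕ} {x y : ℕ → Fin m} (h : x 0 ≠ y 0) :
    1 ≤ dist x y := by
  by_contra! hlt
  exact h (PiNat.apply_eq_of_dist_lt (n := 0) (by simpa using hlt) le_rfl)

/-- The shift map possesses an unpredictable point. -/
theorem shift_unpredictable (m : ℕ) (hm : 2 ≤ m) :
    ∃ x : ℕ → Fin m, ∃ ε : ℝ, 0 < ε ∧ ∃ t s : ℕ → ℕ,
      Tendsto t atTop atTop ∧ Tendsto s atTop atTop ∧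
      Tendsto (fun k => shiftMap^[t k] x) atTop (𝓝 x) ∧
      ∀ k : ℕ, ε ≤ dist (shiftMap^[t k + s k] x) (shiftMap^[s k] x) := by
  set symbol : Bool → Fin m := Fin.castLE hm ∘ finTwoEquiv.symm
  have hsymbol : Function.Injective symbol :=
    (Fin.castLE_injective hm).comp finTwoEquiv.symm.injective
  have hpow : Tendsto (fun k : ℕ => 2 ^ k) atTop atTop :=
    tendsto_pow_atTop_atTop_of_one_lt one_lt_two
  refine ⟨symbol ∘ thueMorse, 1, one_pos, fun k => 3 * 2 ^ k, fun k => 2 ^ (k + 1),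
    hpow.nsmul_atTop three_pos, hpow.comp (tendsto_add_atTop_nat 1), ?_, fun k => ?_⟩
  · exact tendsto_iterate_shiftMap_of_prefix_eq hpow fun k i hi =>
      congrArg symbol (thueMorse_add_three_mul_two_pow hi)
  · refine one_le_dist_of_apply_zero_ne ?_
    rw [shiftMap_iterate_apply, shiftMap_iterate_apply]
    refine hsymbol.ne ?_
    rw [show 0 + (3 * 2 ^ k + 2 ^ (k + 1)) = 5 * 2 ^ k by ring, zero_add,
      thueMorse_five_mul_two_pow, thueMorse_two_pow]
    decide
end

section
/- There exists a unique nonempty compact set A ⊆ X satisfying the self-similarity equation A = ⋃_{j ∈ Fin m} wⱼ(A) (the attractor of the iterated function system). -/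
open Filter Set Metric Topology EMetric TopologicalSpace
open scoped ENNReal NNReal

/-- There exists a unique nonempty compact set `A ⊆ X` with `A = ⋃ j, wⱼ '' A`:
the attractor of the iterated function system. -/
theorem ifs_attractor_exists_unique
    {X : Type*} [MetricSpace X] [Nonempty X] [CompleteSpace X]
    {m : ℕ} (hm : 1 ≤ m) (K : ℝ) (hK0 : 0 ≤ K) (hK1 : K < 1)
    (w : Fin m → X → X) (hcont : ∀ j : Fin m, Continuous (w j))
    (hw : ∀ j : Fin m, ∀ x y : X, dist (w j x) (w j y) ≤ K * dist x y) :
    ∃! A : Set X, A.Nonempty ∧ IsCompact A ∧ A = ⋃ j : Fin m, w j '' A := by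
  have j0 : Fin m := ⟨0, hm⟩
  set K' : ℝ≥0 := K.toNNReal with hK'
  have hK'1 : K' < 1 := by
    rw [hK']
    exact_mod_cast Real.toNNReal_lt_one.2 hK1
  have hwe : ∀ j : Fin m, ∀ x y : X, edist (w j x) (w j y) ≤ (K' : ℝ≥0∞) * edist x y := by
    intro j x y
    rw [edist_dist, edist_dist, ← ENNReal.ofReal_coe_nnreal, ← ENNReal.ofReal_mul (by positivity),
      Real.coe_toNNReal _ hK0]
    exact ENNReal.ofReal_le_ofReal (hw j x y)
  -- the map on nonempty compacts
  have Fdef : ∀ A : NonemptyCompacts X, IsCompact (⋃ j : Fin m, w j '' (A : Set X)) :=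
    fun A => isCompact_iUnion fun j => A.isCompact.image (hcont j)
  set F : NonemptyCompacts X → NonemptyCompacts X :=
    fun A => ⟨⟨⋃ j : Fin m, w j '' (A : Set X), Fdef A⟩,
      ⟨w j0 A.nonempty.some, mem_iUnion.2 ⟨j0, mem_image_of_mem _ A.nonempty.some_mem⟩⟩⟩ with hF
  have hFcoe : ∀ A : NonemptyCompacts X, (F A : Set X) = ⋃ j : Fin m, w j '' (A : Set X) :=
    fun A => rfl
  have hedist : ∀ A B : NonemptyCompacts X,
      edist A B = hausdorffEdist (A : Set X) (B : Set X) := fun A B => rfl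
  -- contraction estimate
  have key : ∀ A B : NonemptyCompacts X, ∀ r : ℝ≥0∞, edist A B < r →
      edist (F A) (F B) ≤ (K' : ℝ≥0∞) * r := by
    intro A B r hr
    rw [hedist, hFcoe, hFcoe]
    rw [hedist] at hr
    apply hausdorffEdist_le_of_mem_edist
    · rintro x hx
      obtain ⟨j, y, hy, rfl⟩ := by simpa using hx
      obtain ⟨z, hz, hyz⟩ := exists_edist_lt_of_hausdorffEdist_lt hy hr
      exact ⟨w j z, mem_iUnion.2 ⟨j, mem_image_of_mem _ hz⟩,
        (hwe j y z).trans (mul_le_mul_right hyz.le _)⟩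
    · rintro x hx
      obtain ⟨j, y, hy, rfl⟩ := by simpa using hx
      obtain ⟨z, hz, hyz⟩ := exists_edist_lt_of_hausdorffEdist_lt hy
        (by rwa [hausdorffEdist_comm])
      exact ⟨w j z, mem_iUnion.2 ⟨j, mem_image_of_mem _ hz⟩,
        (hwe j y z).trans (mul_le_mul_right hyz.le _)⟩
  have hC : ContractingWith K' F := by
    refine ⟨hK'1, fun A B => ?_⟩
    apply ENNReal.le_of_forall_pos_le_add
    intro ε hε _
    calc edist (F A) (F B) ≤ (K' : ℝ≥0∞) * (edist A B + ε) :=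
          key A B _ (ENNReal.lt_add_right (edist_ne_top A B) (by exact_mod_cast hε.ne'))
      _ = (K' : ℝ≥0∞) * edist A B + (K' : ℝ≥0∞) * ε := by ring
      _ ≤ (K' : ℝ≥0∞) * edist A B + ε := by
          gcongr
          exact mul_le_of_le_one_left zero_le (by exact_mod_cast hK'1.le)
  haveI : Nonempty (NonemptyCompacts X) :=
    ⟨⟨⟨{Classical.arbitrary X}, isCompact_singleton⟩, singleton_nonempty _⟩⟩
  set A₀ : NonemptyCompacts X := ContractingWith.fixedPoint F hC with hA₀
  have hfix : F A₀ = A₀ := hC.fixedPoint_isFixedPt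
  refine ⟨(A₀ : Set X), ⟨A₀.nonempty, A₀.isCompact, ?_⟩, ?_⟩
  · conv_lhs => rw [← hfix]
    exact hFcoe A₀
  · rintro B ⟨hBne, hBc, hBeq⟩
    set B' : NonemptyCompacts X := ⟨⟨B, hBc⟩, hBne⟩ with hB'
    have : F B' = B' := by
      apply NonemptyCompacts.ext
      rw [hFcoe]
      exact hBeq.symm
    have := hC.fixedPoint_unique this
    exact congrArg (fun s : NonemptyCompacts X => (s : Set X)) this
end
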